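/- Let S consist of 2n points given as n pairs {p_i, q_i} in a metric space, let T be a minimum spanning tree of S, let h be a maximum-weight edge of T, and let T_1, T_2 be the vertex sets of the two components of T after removing h. If neither T_1 nor T_2 contains both points of any pair, then the coloring R = T_1, B = T_2 is feasible and optimal: mstCost(T_1) + mstCost(T_2) = min over all feasible colorings S = R' ∪ B' of (mstCost(R') + mstCost(B')). -/

import Mathlib

/-!
Deleting the heaviest edge `h` from a minimum spanning tree `T` of `S` leaves spanning trees
of `T₁` and `T₂` (each side of `T - h` is connected, and the edge count leaves no room for
more), so `mstCost T₁ + mstCost T₂ + |h| ≤ mstCost S`. Conversely, for any feasible coloring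
`S = R ∪ B` some edge `e` of `T` joins `R` to `B`; adding `e` to minimum spanning trees of `R`
and `B` gives a spanning tree of `S`, so `mstCost S ≤ mstCost R + mstCost B + |e|`, and
`|e| ≤ |h|`.
-/

variable {α : Type*} [MetricSpace α] [DecidableEq α]

/-- Two points are connected via the edge set `E` (edges usable in both directions). -/
def EdgeConn (E : Finset (α × α)) (x y : α) : Prop :=
  Relation.ReflTransGen (fun a b => (a, b) ∈ E ∨ (b, a) ∈ E) x y

/-- `E` is (the edge set of) a spanning tree of the complete graph on the finite
point set `X`. -/
def IsSpanningTreeOn (X : Finset α) (E : Finset (α × α)) : Prop :=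
  (∀ e ∈ E, e.1 ∈ X ∧ e.2 ∈ X) ∧ E.card + 1 = X.card ∧
    ∀ x ∈ X, ∀ y ∈ X, EdgeConn E x y

/-- The minimum total edge length of a spanning tree on `X`. -/
noncomputable def mstCost (X : Finset α) : ℝ :=
  sInf {c | ∃ E : Finset (α × α), IsSpanningTreeOn X E ∧ c = ∑ e ∈ E, dist e.1 e.2}

section EdgeConn

variable {V : Type*} {E F : Finset (V × V)} {x y : V}

theorem EdgeConn.symm (h : EdgeConn E x y) : EdgeConn E y x :=
  Relation.ReflTransGen.mono (fun _ _ => Or.symm) _ _ (Relation.ReflTransGen.swap _ _ h)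

theorem EdgeConn.mono (hEF : E ⊆ F) (h : EdgeConn E x y) : EdgeConn F x y :=
  Relation.ReflTransGen.mono (fun _ _ => Or.imp (@hEF _) (@hEF _)) _ _ h

theorem EdgeConn.of_single (he : (x, y) ∈ E) : EdgeConn E x y :=
  Relation.ReflTransGen.single (Or.inl he)

theorem EdgeConn.imp_of_forall_iff {P : V → Prop} (hP : ∀ e ∈ E, P e.1 ↔ P e.2)
    (h : EdgeConn E x y) (hx : P x) : P y := by
  induction h with
  | refl => exact hx
  | tail _ hbc ih =>
    rcases hbc with he | he
    · exact (hP _ he).1 ih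
    · exact (hP _ he).2 ih

theorem EdgeConn.exists_crossing {P : V → Prop} (h : EdgeConn E x y) (hx : P x) (hy : ¬P y) :
    ∃ e ∈ E, ¬(P e.1 ↔ P e.2) := by
  by_contra! hP
  exact hy (EdgeConn.imp_of_forall_iff hP h hx)

theorem EdgeConn.filter {P : V → Prop} [DecidablePred P] (hP : ∀ e ∈ E, P e.1 ↔ P e.2)
    (h : EdgeConn E x y) (hx : P x) : EdgeConn (E.filter (P ·.1)) x y := by
  induction h with
  | refl => exact Relation.ReflTransGen.refl
  | @tail b c hxb hbc ih =>
    have hb : P b := EdgeConn.imp_of_forall_iff hP hxb hx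
    refine ih.tail (hbc.imp (fun he => Finset.mem_filter.2 ⟨he, hb⟩) fun he => ?_)
    exact Finset.mem_filter.2 ⟨he, (hP _ he).2 hb⟩

theorem EdgeConn.reachable_fromRel {X : Finset V} (hE : ∀ e ∈ E, e.1 ∈ X ∧ e.2 ∈ X)
    (x : X) (h : EdgeConn E x y) :
    ∃ hy : y ∈ X, (SimpleGraph.fromRel fun u v : X => ((u : V), (v : V)) ∈ E).Reachable
      x ⟨y, hy⟩ := by
  induction h with
  | refl => exact ⟨x.2, .rfl⟩
  | @tail b c _ hbc ih =>
    obtain ⟨hb, hxb⟩ := ih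
    have hc : c ∈ X := hbc.elim (fun he => (hE _ he).2) fun he => (hE _ he).1
    refine ⟨hc, hxb.trans ?_⟩
    by_cases hbc' : b = c
    · subst hbc'; rfl
    · exact SimpleGraph.Adj.reachable
        ((SimpleGraph.fromRel_adj _ _ _).2 ⟨fun h => hbc' (congrArg Subtype.val h), hbc⟩)

theorem card_le_card_add_one_of_edgeConn {X : Finset V}
    (hE : ∀ e ∈ E, e.1 ∈ X ∧ e.2 ∈ X) (hconn : ∀ x ∈ X, ∀ y ∈ X, EdgeConn E x y) :
    X.card ≤ E.card + 1 := by
  classical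
  rcases X.eq_empty_or_nonempty with rfl | ⟨x₀, hx₀⟩
  · simp
  set G : SimpleGraph X := SimpleGraph.fromRel fun u v : X => ((u : V), (v : V)) ∈ E
  have : Nonempty X := ⟨⟨x₀, hx₀⟩⟩
  have hG : G.Connected :=
    ⟨fun x y => (EdgeConn.reachable_fromRel hE x (hconn x.1 x.2 y.1 y.2)).2⟩
  have hedges : G.edgeFinset.image (Sym2.map Subtype.val) ⊆ E.image fun e => s(e.1, e.2) := by
    intro t ht
    obtain ⟨s, hs, rfl⟩ := Finset.mem_image.1 ht
    induction s using Sym2.ind with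
    | _ u v =>
      rw [SimpleGraph.mem_edgeFinset, SimpleGraph.mem_edgeSet, SimpleGraph.fromRel_adj] at hs
      rcases hs.2 with he | he
      · exact Finset.mem_image.2 ⟨_, he, rfl⟩
      · exact Finset.mem_image.2 ⟨_, he, Sym2.eq_swap⟩
  calc X.card = Nat.card X := (Nat.card_eq_finsetCard X).symm
    _ ≤ Nat.card G.edgeSet + 1 := hG.card_vert_le_card_edgeSet_add_one
    _ = (G.edgeFinset.image (Sym2.map Subtype.val)).card + 1 := by
      rw [Finset.card_image_of_injective _ (Sym2.map.injective Subtype.val_injective),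
        SimpleGraph.edgeFinset_card, Nat.card_eq_fintype_card]
    _ ≤ E.card + 1 := by
      gcongr
      exact (Finset.card_le_card hedges).trans Finset.card_image_le

end EdgeConn

section SpanningTree

variable {V : Type*} {X Y : Finset V} {E F : Finset (V × V)} {x y : V}

theorem IsSpanningTreeOn.subset_product (hE : IsSpanningTreeOn X E) : E ⊆ X ×ˢ X :=
  fun e he => Finset.mem_product.2 (hE.1 e he)

theorem exists_isSpanningTreeOn (hX : X.Nonempty) : ∃ E, IsSpanningTreeOn X E := by
  classical
  obtain ⟨x₀, hx₀⟩ := hX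
  have hstar : ∀ z ∈ X, EdgeConn ((X.erase x₀).image (x₀, ·)) x₀ z := by
    intro z hz
    by_cases hzx : z = x₀
    · exact hzx ▸ Relation.ReflTransGen.refl
    · exact EdgeConn.of_single (Finset.mem_image_of_mem _ (Finset.mem_erase.2 ⟨hzx, hz⟩))
  refine ⟨(X.erase x₀).image (x₀, ·), fun e he => ?_, ?_,
    fun x hx y hy => (hstar x hx).symm.trans (hstar y hy)⟩
  · obtain ⟨y, hy, rfl⟩ := Finset.mem_image.1 he
    exact ⟨hx₀, Finset.mem_of_mem_erase hy⟩
  · rw [Finset.card_image_of_injective _ (Prod.mk_right_injective x₀),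
      Finset.card_erase_add_one hx₀]

theorem IsSpanningTreeOn.disjoint_edges (hXY : Disjoint X Y) (hE : IsSpanningTreeOn X E)
    (hF : IsSpanningTreeOn Y F) : Disjoint E F :=
  (Finset.disjoint_product.2 (Or.inl hXY)).mono hE.subset_product hF.subset_product

theorem IsSpanningTreeOn.pair_notMem_union [DecidableEq V] (hXY : Disjoint X Y)
    (hE : IsSpanningTreeOn X E) (hF : IsSpanningTreeOn Y F) (hx : x ∈ X) (hy : y ∈ Y) :
    (x, y) ∉ E ∪ F := by
  rw [Finset.mem_union, not_or]
  exact ⟨fun he => Finset.disjoint_left.1 hXY (hE.1 _ he).2 hy,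
    fun hf => Finset.disjoint_left.1 hXY hx (hF.1 _ hf).1⟩

theorem IsSpanningTreeOn.union_insert [DecidableEq V] (hXY : Disjoint X Y)
    (hE : IsSpanningTreeOn X E) (hF : IsSpanningTreeOn Y F) (hx : x ∈ X) (hy : y ∈ Y) :
    IsSpanningTreeOn (X ∪ Y) (insert (x, y) (E ∪ F)) := by
  have hEs : E ⊆ insert (x, y) (E ∪ F) :=
    Finset.subset_union_left.trans (Finset.subset_insert _ _)
  have hFs : F ⊆ insert (x, y) (E ∪ F) :=
    Finset.subset_union_right.trans (Finset.subset_insert _ _)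
  have hfrom_x : ∀ z ∈ X ∪ Y, EdgeConn (insert (x, y) (E ∪ F)) x z := by
    intro z hz
    rcases Finset.mem_union.1 hz with hz | hz
    · exact (hE.2.2 x hx z hz).mono hEs
    · exact (EdgeConn.of_single (Finset.mem_insert_self _ _)).trans ((hF.2.2 y hy z hz).mono hFs)
  refine ⟨fun e he => ?_, ?_, fun u hu v hv => (hfrom_x u hu).symm.trans (hfrom_x v hv)⟩
  · rcases Finset.mem_insert.1 he with rfl | he
    · exact ⟨Finset.mem_union_left _ hx, Finset.mem_union_right _ hy⟩
    rcases Finset.mem_union.1 he with he | he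
    · exact ⟨Finset.mem_union_left _ (hE.1 e he).1, Finset.mem_union_left _ (hE.1 e he).2⟩
    · exact ⟨Finset.mem_union_right _ (hF.1 e he).1, Finset.mem_union_right _ (hF.1 e he).2⟩
  · rw [Finset.card_insert_of_notMem (hE.pair_notMem_union hXY hF hx hy),
      Finset.card_union_of_disjoint (hE.disjoint_edges hXY hF),
      Finset.card_union_of_disjoint hXY, ← hE.2.1, ← hF.2.1]
    ring

theorem IsSpanningTreeOn.filter_erase [DecidableEq V] {T : Finset (V × V)} {h : V × V}
    (hT : IsSpanningTreeOn (X ∪ Y) T) (hh : h ∈ T) (hXY : Disjoint X Y)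
    (hcomp : ∀ x ∈ X ∪ Y, ∀ y ∈ X ∪ Y,
      EdgeConn (T.erase h) x y ↔ (x ∈ X ∧ y ∈ X) ∨ (x ∈ Y ∧ y ∈ Y)) :
    IsSpanningTreeOn X ((T.erase h).filter (·.1 ∈ X)) ∧
      IsSpanningTreeOn Y ((T.erase h).filter (·.1 ∉ X)) := by
  set EX := (T.erase h).filter (·.1 ∈ X)
  set EY := (T.erase h).filter (·.1 ∉ X)
  have hends : ∀ e ∈ T.erase h, e.1 ∈ X ∪ Y ∧ e.2 ∈ X ∪ Y :=
    fun e he => hT.1 e (Finset.mem_of_mem_erase he)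
  have hside : ∀ e ∈ T.erase h, e.1 ∈ X ↔ e.2 ∈ X := by
    intro e he
    rcases (hcomp _ (hends e he).1 _ (hends e he).2).1 (EdgeConn.of_single he) with
      ⟨h1, h2⟩ | ⟨h1, h2⟩
    · exact iff_of_true h1 h2
    · exact iff_of_false (Finset.disjoint_right.1 hXY h1) (Finset.disjoint_right.1 hXY h2)
  have hside' : ∀ e ∈ T.erase h, e.1 ∉ X ↔ e.2 ∉ X := fun e he => not_congr (hside e he)
  have hY : ∀ z ∈ X ∪ Y, z ∉ X → z ∈ Y :=
    fun z hz => (Finset.mem_union.1 hz).resolve_left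
  have hconnX : ∀ x ∈ X, ∀ y ∈ X, EdgeConn EX x y := fun x hx y hy =>
    EdgeConn.filter (P := (· ∈ X)) hside
      ((hcomp x (Finset.mem_union_left _ hx) y (Finset.mem_union_left _ hy)).2
        (Or.inl ⟨hx, hy⟩)) hx
  have hconnY : ∀ x ∈ Y, ∀ y ∈ Y, EdgeConn EY x y := fun x hx y hy =>
    EdgeConn.filter (P := (· ∉ X)) hside'
      ((hcomp x (Finset.mem_union_right _ hx) y (Finset.mem_union_right _ hy)).2
        (Or.inr ⟨hx, hy⟩)) (Finset.disjoint_right.1 hXY hx)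
  have hendsX : ∀ e ∈ EX, e.1 ∈ X ∧ e.2 ∈ X := by
    intro e he
    rw [Finset.mem_filter] at he
    exact ⟨he.2, (hside e he.1).1 he.2⟩
  have hendsY : ∀ e ∈ EY, e.1 ∈ Y ∧ e.2 ∈ Y := by
    intro e he
    rw [Finset.mem_filter] at he
    exact ⟨hY _ (hends e he.1).1 he.2, hY _ (hends e he.1).2 ((hside' e he.1).1 he.2)⟩
  -- Each side is connected, so has at least `#side - 1` edges; the total count forces equality.
  have hcardX := card_le_card_add_one_of_edgeConn hendsX hconnX
  have hcardY := card_le_card_add_one_of_edgeConn hendsY hconnY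
  have hcard : EX.card + EY.card + 2 = X.card + Y.card := by
    rw [Finset.card_filter_add_card_filter_not, Finset.card_erase_of_mem hh,
      ← Finset.card_union_of_disjoint hXY, ← hT.2.1]
    have := Finset.card_pos.2 ⟨h, hh⟩
    omega
  exact ⟨⟨hendsX, by omega, hconnX⟩, ⟨hendsY, by omega, hconnY⟩⟩

end SpanningTree

section MinimumSpanningTree

variable {M : Type*} [MetricSpace M] {X Y : Finset M} {E T : Finset (M × M)}

theorem IsSpanningTreeOn.mstCost_le (hE : IsSpanningTreeOn X E) :
    mstCost X ≤ ∑ e ∈ E, dist e.1 e.2 :=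
  csInf_le ⟨0, fun _ ⟨_, _, hc⟩ => hc ▸ Finset.sum_nonneg fun _ _ => dist_nonneg⟩
    ⟨E, hE, rfl⟩

theorem exists_isSpanningTreeOn_sum_eq_mstCost (hX : X.Nonempty) :
    ∃ E, IsSpanningTreeOn X E ∧ ∑ e ∈ E, dist e.1 e.2 = mstCost X := by
  set costs := {c | ∃ E : Finset (M × M), IsSpanningTreeOn X E ∧ c = ∑ e ∈ E, dist e.1 e.2}
  have hne : costs.Nonempty := by
    obtain ⟨E, hE⟩ := exists_isSpanningTreeOn hX
    exact ⟨_, E, hE, rfl⟩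
  have hfin : costs.Finite := by
    refine ((X ×ˢ X).powerset.finite_toSet.image fun E => ∑ e ∈ E, dist e.1 e.2).subset ?_
    rintro _ ⟨E, hE, rfl⟩
    exact ⟨E, Finset.mem_powerset.2 hE.subset_product, rfl⟩
  obtain ⟨E, hE, hc⟩ := hne.csInf_mem hfin
  exact ⟨E, hE, hc.symm⟩

theorem mstCost_union_le [DecidableEq M] (hXY : Disjoint X Y) {x y : M} (hx : x ∈ X)
    (hy : y ∈ Y) : mstCost (X ∪ Y) ≤ mstCost X + mstCost Y + dist x y := by
  obtain ⟨E, hE, hEc⟩ := exists_isSpanningTreeOn_sum_eq_mstCost ⟨x, hx⟩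
  obtain ⟨F, hF, hFc⟩ := exists_isSpanningTreeOn_sum_eq_mstCost ⟨y, hy⟩
  calc mstCost (X ∪ Y) ≤ ∑ e ∈ insert (x, y) (E ∪ F), dist e.1 e.2 :=
        (hE.union_insert hXY hF hx hy).mstCost_le
    _ = mstCost X + mstCost Y + dist x y := by
      rw [Finset.sum_insert (hE.pair_notMem_union hXY hF hx hy),
        Finset.sum_union (hE.disjoint_edges hXY hF), hEc, hFc, add_comm]

theorem IsSpanningTreeOn.exists_mem_mstCost_union_le [DecidableEq M]
    (hT : IsSpanningTreeOn (X ∪ Y) T) (hXY : Disjoint X Y) (hX : X.Nonempty) (hY : Y.Nonempty) :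
    ∃ e ∈ T, mstCost (X ∪ Y) ≤ mstCost X + mstCost Y + dist e.1 e.2 := by
  obtain ⟨x, hx⟩ := hX
  obtain ⟨y, hy⟩ := hY
  obtain ⟨e, he, hcross⟩ := (hT.2.2 x (Finset.mem_union_left _ hx) y
    (Finset.mem_union_right _ hy)).exists_crossing (P := (· ∈ X)) hx
    (Finset.disjoint_right.1 hXY hy)
  have hinY : ∀ z ∈ X ∪ Y, z ∉ X → z ∈ Y :=
    fun z hz => (Finset.mem_union.1 hz).resolve_left
  refine ⟨e, he, ?_⟩
  by_cases he₁ : e.1 ∈ X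
  · have he₂ : e.2 ∉ X := fun he₂ => hcross (iff_of_true he₁ he₂)
    exact mstCost_union_le hXY he₁ (hinY _ (hT.1 e he).2 he₂)
  · have he₂ : e.2 ∈ X := by_contra fun he₂ => hcross (iff_of_false he₁ he₂)
    rw [dist_comm]
    exact mstCost_union_le hXY he₂ (hinY _ (hT.1 e he).1 he₁)

theorem IsSpanningTreeOn.mstCost_add_mstCost_add_dist_le [DecidableEq M] {h : M × M}
    (hT : IsSpanningTreeOn (X ∪ Y) T) (hh : h ∈ T) (hXY : Disjoint X Y)
    (hcomp : ∀ x ∈ X ∪ Y, ∀ y ∈ X ∪ Y,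
      EdgeConn (T.erase h) x y ↔ (x ∈ X ∧ y ∈ X) ∨ (x ∈ Y ∧ y ∈ Y)) :
    mstCost X + mstCost Y + dist h.1 h.2 ≤ ∑ e ∈ T, dist e.1 e.2 := by
  obtain ⟨hTX, hTY⟩ := hT.filter_erase hh hXY hcomp
  calc mstCost X + mstCost Y + dist h.1 h.2
      ≤ ∑ e ∈ (T.erase h).filter (·.1 ∈ X), dist e.1 e.2 +
          ∑ e ∈ (T.erase h).filter (·.1 ∉ X), dist e.1 e.2 + dist h.1 h.2 := by
        gcongr
        exacts [hTX.mstCost_le, hTY.mstCost_le]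
    _ = ∑ e ∈ T, dist e.1 e.2 := by
      rw [Finset.sum_filter_add_sum_filter_not, Finset.sum_erase_add _ _ hh]

end MinimumSpanningTree

section Coloring

variable {ι β : Type*} [Fintype ι] [DecidableEq β] {p : ι × Bool → β}

/-- The red class `R` of the feasible coloring `σ`; its blue class is `colorClass p (!σ ·)`. -/
def colorClass (p : ι × Bool → β) (σ : ι → Bool) : Finset β :=
  Finset.univ.image fun i => p (i, σ i)

theorem mem_colorClass {σ : ι → Bool} {x : β} :
    x ∈ colorClass p σ ↔ ∃ i, p (i, σ i) = x := by
  simp [colorClass]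

theorem colorClass_nonempty [Nonempty ι] (σ : ι → Bool) : (colorClass p σ).Nonempty :=
  Finset.univ_nonempty.image _

theorem colorClass_union_colorClass_not (σ : ι → Bool) :
    colorClass p σ ∪ colorClass p (fun i => !σ i) = Finset.univ.image p := by
  ext x
  simp only [Finset.mem_union, mem_colorClass, Finset.mem_image, Finset.mem_univ, true_and,
    Prod.exists]
  constructor
  · rintro (⟨i, rfl⟩ | ⟨i, rfl⟩) <;> exact ⟨i, _, rfl⟩
  · rintro ⟨i, b, rfl⟩
    rcases Bool.eq_or_eq_not b (σ i) with rfl | rfl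
    exacts [Or.inl ⟨i, rfl⟩, Or.inr ⟨i, rfl⟩]

theorem disjoint_colorClass_not (hp : p.Injective) (σ : ι → Bool) :
    Disjoint (colorClass p σ) (colorClass p fun i => !σ i) := by
  simp only [Finset.disjoint_left, mem_colorClass]
  rintro _ ⟨i, rfl⟩ ⟨j, hji⟩
  obtain ⟨rfl, hσ⟩ := Prod.ext_iff.1 (hp hji)
  exact Bool.not_ne_self _ hσ

theorem eq_colorClass_of_mem_iff {A : Finset β} (hA : A ⊆ Finset.univ.image p)
    (hpair : ∀ i, p (i, true) ∈ A ↔ p (i, false) ∉ A) :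
    A = colorClass p fun i => decide (p (i, true) ∈ A) := by
  ext x
  rw [mem_colorClass]
  constructor
  · intro hx
    obtain ⟨⟨i, b⟩, -, rfl⟩ := Finset.mem_image.1 (hA hx)
    refine ⟨i, ?_⟩
    cases b
    · simp [(not_congr (hpair i)).2 (not_not.2 hx)]
    · simp [hx]
  · rintro ⟨i, rfl⟩
    by_cases hi : p (i, true) ∈ A
    · simp [hi]
    · simpa [hi] using not_not.1 ((not_congr (hpair i)).1 hi)

theorem exists_colorClass_eq {A B : Finset β} (hAB : A ∪ B = Finset.univ.image p)
    (hdisj : Disjoint A B) (hA : ∀ i, ¬(p (i, false) ∈ A ∧ p (i, true) ∈ A))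
    (hB : ∀ i, ¬(p (i, false) ∈ B ∧ p (i, true) ∈ B)) :
    ∃ σ : ι → Bool, A = colorClass p σ ∧ B = colorClass p fun i => !σ i := by
  have hmem : ∀ i b, p (i, b) ∈ A ∨ p (i, b) ∈ B := fun i b =>
    Finset.mem_union.1 (hAB ▸ Finset.mem_image_of_mem p (Finset.mem_univ _))
  have hnotB : ∀ x ∈ A, x ∉ B := fun _ hx => Finset.disjoint_left.1 hdisj hx
  have hpairA : ∀ i, p (i, true) ∈ A ↔ p (i, false) ∉ A := fun i =>
    ⟨fun ht hf => hA i ⟨hf, ht⟩,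
      fun hf => (hmem i true).resolve_right fun ht =>
        hB i ⟨(hmem i false).resolve_left hf, ht⟩⟩
  have hpairB : ∀ i, p (i, true) ∈ B ↔ p (i, false) ∉ B := fun i =>
    ⟨fun ht hf => hB i ⟨hf, ht⟩,
      fun hf => (hmem i true).resolve_left fun ht =>
        hA i ⟨(hmem i false).resolve_right hf, ht⟩⟩
  refine ⟨_, eq_colorClass_of_mem_iff (hAB ▸ Finset.subset_union_left) hpairA, ?_⟩
  convert eq_colorClass_of_mem_iff (hAB ▸ Finset.subset_union_right) hpairB using 4 with i
  by_cases hi : p (i, true) ∈ A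
  · simp [hi, hnotB _ hi]
  · simp [hi, (hmem i true).resolve_left hi]

end Coloring

theorem component_coloring_optimal_general
    (n : ℕ) (hn : 1 ≤ n)
    (pts : Fin n × Bool → α) (hinj : Function.Injective pts)
    (S : Finset α) (hS : S = Finset.image pts Finset.univ)
    (T : Finset (α × α)) (hT : IsSpanningTreeOn S T)
    (hTmin : (∑ e ∈ T, dist e.1 e.2) = mstCost S)
    (h : α × α) (hh : h ∈ T) (hmax : ∀ e ∈ T, dist e.1 e.2 ≤ dist h.1 h.2)
    (T₁ T₂ : Finset α) (hpart : T₁ ∪ T₂ = S) (hdisj : Disjoint T₁ T₂)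
    (hcomp : ∀ x ∈ S, ∀ y ∈ S,
      EdgeConn (T.erase h) x y ↔ ((x ∈ T₁ ∧ y ∈ T₁) ∨ (x ∈ T₂ ∧ y ∈ T₂)))
    (hnopairT₁ : ∀ i : Fin n, ¬ (pts (i, false) ∈ T₁ ∧ pts (i, true) ∈ T₁))
    (hnopairT₂ : ∀ i : Fin n, ¬ (pts (i, false) ∈ T₂ ∧ pts (i, true) ∈ T₂)) :
    (∃ σ : Fin n → Bool,
      T₁ = Finset.image (fun i => pts (i, σ i)) Finset.univ ∧
      T₂ = Finset.image (fun i => pts (i, !(σ i))) Finset.univ) ∧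
    mstCost T₁ + mstCost T₂ =
      ⨅ σ : Fin n → Bool,
        (mstCost (Finset.image (fun i => pts (i, σ i)) Finset.univ) +
         mstCost (Finset.image (fun i => pts (i, !(σ i))) Finset.univ)) := by
  subst hpart
  have : Nonempty (Fin n) := ⟨⟨0, hn⟩⟩
  have hupper := hT.mstCost_add_mstCost_add_dist_le hh hdisj hcomp
  have hlower : ∀ τ : Fin n → Bool, mstCost T₁ + mstCost T₂ ≤
      mstCost (colorClass pts τ) + mstCost (colorClass pts fun i => !τ i) := by
    intro τ
    have hτ : colorClass pts τ ∪ colorClass pts (fun i => !τ i) = T₁ ∪ T₂ := by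
      rw [colorClass_union_colorClass_not, hS]
    obtain ⟨e, he, hcut⟩ := (hτ ▸ hT).exists_mem_mstCost_union_le
      (disjoint_colorClass_not hinj τ) (colorClass_nonempty τ) (colorClass_nonempty _)
    rw [hτ] at hcut
    linarith [hmax e he]
  obtain ⟨σ, hσ₁, hσ₂⟩ := exists_colorClass_eq hS hdisj hnopairT₁ hnopairT₂
  refine ⟨⟨σ, hσ₁, hσ₂⟩, le_antisymm (le_ciInf hlower) ?_⟩
  rw [hσ₁, hσ₂]
  exact ciInf_le ⟨_, Set.forall_mem_range.2 hlower⟩ σ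

/-- `S` consists of `n` pairs `{pts (i, false), pts (i, true)}`. Let `T` be
a minimum spanning tree of `S`, `h` a maximum-weight edge of `T`, and `T₁, T₂` the vertex
sets of the two components of `T` after removing `h`. If neither `T₁` nor `T₂` contains
both points of any pair, then the coloring `R = T₁, B = T₂` is feasible and optimal for
the Min-Sum 2-MST problem. -/
theorem component_coloring_optimal
    (n : ℕ) (hn : 1 ≤ n)
    (pts : Fin n × Bool → α) (hinj : Function.Injective pts)
    (S : Finset α) (hS : S = Finset.image pts Finset.univ)
    (T : Finset (α × α)) (hT : IsSpanningTreeOn S T)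
    (hTmin : (∑ e ∈ T, dist e.1 e.2) = mstCost S)
    (h : α × α) (hh : h ∈ T) (hmax : ∀ e ∈ T, dist e.1 e.2 ≤ dist h.1 h.2)
    (T₁ T₂ : Finset α) (hpart : T₁ ∪ T₂ = S) (hdisj : Disjoint T₁ T₂)
    (hne1 : T₁.Nonempty) (hne2 : T₂.Nonempty)
    (hcomp : ∀ x ∈ S, ∀ y ∈ S,
      EdgeConn (T.erase h) x y ↔ ((x ∈ T₁ ∧ y ∈ T₁) ∨ (x ∈ T₂ ∧ y ∈ T₂)))
    (hnopairT₁ : ∀ i : Fin n, ¬ (pts (i, false) ∈ T₁ ∧ pts (i, true) ∈ T₁))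
    (hnopairT₂ : ∀ i : Fin n, ¬ (pts (i, false) ∈ T₂ ∧ pts (i, true) ∈ T₂)) :
    (∃ σ : Fin n → Bool,
      T₁ = Finset.image (fun i => pts (i, σ i)) Finset.univ ∧
      T₂ = Finset.image (fun i => pts (i, !(σ i))) Finset.univ) ∧
    mstCost T₁ + mstCost T₂ =
      ⨅ σ : Fin n → Bool,
        (mstCost (Finset.image (fun i => pts (i, σ i)) Finset.univ) +
         mstCost (Finset.image (fun i => pts (i, !(σ i))) Finset.univ)) :=
  component_coloring_optimal_general n hn pts hinj S hS T hT hTmin h hh hmax T₁ T₂ hpart hdisj hcomp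
    hnopairT₁ hnopairT₂
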